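/- arXiv:2109.07585 — 3 statements merged into one kernel-verified Lean document; each statement's English description precedes it below -/
import Mathlib

section
/- Let F be a properly parametrized Markov multi-map with forward trajectory space X (with left-shift map T) and associated SFT Σ_M. If (X,T) is topologically transitive, then Σ_M satisfies the Irreducibility Condition (IC). -/
open Set Topology

/-! ### Generic dynamical notions -/

/-- Topological transitivity of a map. -/
def TopTransitive {α : Type*} [TopologicalSpace α] (T : α → α) : Prop :=
  ∀ U V : Set α, IsOpen U → IsOpen V → U.Nonempty → V.Nonempty →
    ∃ n : ℕ, (T^[n] '' U ∩ V).Nonempty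

/-- Topological mixing of a map. -/
def TopMixing {α : Type*} [TopologicalSpace α] (T : α → α) : Prop :=
  ∀ U V : Set α, IsOpen U → IsOpen V → U.Nonempty → V.Nonempty →
    ∃ N : ℕ, ∀ n, N ≤ n → (T^[n] '' U ∩ V).Nonempty

/-- Density of the set of periodic points of a map. -/
def DensePeriodic {α : Type*} [TopologicalSpace α] (T : α → α) : Prop :=
  Dense {x : α | ∃ p : ℕ, 1 ≤ p ∧ T^[p] x = x}

/-- The metric `d(x,y) = sup_k |x_k - y_k|/(k+1)` on sequence spaces. -/
noncomputable def dseq (x y : ℕ → ℝ) : ℝ := ⨆ k : ℕ, |x k - y k| / ((k : ℝ) + 1)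

/-- The specification property for a map `T` with respect to a distance function `d`. -/
def SpecProp {α : Type*} (T : α → α) (d : α → α → ℝ) : Prop :=
  ∀ ε : ℝ, 0 < ε → ∃ N : ℕ, ∀ l : ℕ, ∀ x : Fin (l + 1) → α, ∀ a b : Fin (l + 1) → ℕ,
    (∀ k, 1 ≤ a k) → (∀ k, a k ≤ b k) →
    (∀ k : Fin l, b k.castSucc < a k.succ ∧ b k.castSucc + N ≤ a k.succ) →
    ∀ p : ℕ, b (Fin.last l) + N ≤ p →
      ∃ z : α, T^[p] z = z ∧
        ∀ k : Fin (l + 1), ∀ i : ℕ, a k ≤ i → i ≤ b k → d (T^[i] z) (T^[i] (x k)) < ε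

/-- The length `ℓ` of a (possibly degenerate) interval. -/
noncomputable def intervalLen (I : Set ℝ) : ℝ := sSup I - sInf I

/-! ### Markov multi-maps -/

/-- A Markov multi-map of the interval, given by a tuple
`(P, A₀, A₁, A₂, D, R, {f_a})` as in the paper, together with the derived data
(inverse maps `g`, interiors `D0`, `R0`, graphs `Gr`, `G0`) which are uniquely
determined by the defining equations below. -/
structure MarkovMultiMap where
  A : Type
  finA : Finite A
  A0 : Set A
  A1 : Set A
  A2 : Set A
  P : Finset ℝ
  D : A → Set ℝ
  R : A → Set ℝ
  f : A → ℝ → ℝ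
  g : A → ℝ → ℝ
  D0 : A → Set ℝ
  R0 : A → Set ℝ
  Gr : A → Set (ℝ × ℝ)
  G0 : A → Set (ℝ × ℝ)
  P_zero : (0 : ℝ) ∈ P
  P_one : (1 : ℝ) ∈ P
  P_sub : (P : Set ℝ) ⊆ Set.Icc 0 1
  A_cover : ∀ a : A, a ∈ A0 ∨ a ∈ A1 ∨ a ∈ A2
  A01 : A0 ∩ A1 = ∅
  A02 : A0 ∩ A2 = ∅
  A12 : A1 ∩ A2 = ∅
  D_A0 : ∀ a ∈ A0, ∃ p ∈ P, ∃ q ∈ P, p < q ∧ (∀ r ∈ P, ¬(p < r ∧ r < q)) ∧ D a = Set.Icc p q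
  D_A12 : ∀ a ∈ A1 ∪ A2, ∃ p ∈ P, D a = {p}
  R_A0 : ∀ a ∈ A0, ∃ u ∈ P, ∃ v ∈ P, u < v ∧ R a = Set.Icc u v
  R_A1 : ∀ a ∈ A1, ∃ u ∈ P, ∃ v ∈ P, u < v ∧ R a = Set.Icc u v ∧
    Set.Icc u v ∩ (P : Set ℝ) = {u, v}
  R_A2 : ∀ a ∈ A2, ∃ u ∈ P, R a = {u}
  f_homeo : ∀ a ∈ A0, ContinuousOn (f a) (D a) ∧ Set.BijOn (f a) (D a) (R a)
  g_A0 : ∀ a ∈ A0, (∀ x ∈ D a, g a (f a x) = x) ∧ ∀ y ∈ R a, g a y ∈ D a ∧ f a (g a y) = y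
  g_A12 : ∀ a ∈ A1 ∪ A2, ∀ y ∈ R a, g a y ∈ D a
  cover : Set.Icc (0 : ℝ) 1 = ⋃ a : A, D a
  D0_A0 : ∀ a ∈ A0, D0 a = interior (D a)
  D0_A12 : ∀ a ∈ A1 ∪ A2, D0 a = D a
  R0_A01 : ∀ a ∈ A0 ∪ A1, R0 a = interior (R a)
  R0_A2 : ∀ a ∈ A2, R0 a = R a
  Gr_A0 : ∀ a ∈ A0, Gr a = {q : ℝ × ℝ | q.1 ∈ D a ∧ q.2 = f a q.1}
  Gr_A12 : ∀ a ∈ A1 ∪ A2, Gr a = (D a) ×ˢ (R a)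
  G0_A0 : ∀ a ∈ A0, G0 a = {q : ℝ × ℝ | q.1 ∈ D0 a ∧ q.2 = f a q.1}
  G0_A1 : ∀ a ∈ A1, G0 a = (D a) ×ˢ (R0 a)
  G0_A2 : ∀ a ∈ A2, G0 a = Gr a

namespace MarkovMultiMap

variable (M : MarkovMultiMap)

/-- The graph `G(F)` of the multi-map. -/
def GF : Set (ℝ × ℝ) := ⋃ a : M.A, M.Gr a

/-- `F` is properly parametrized: the sets `G₀(a)` partition `G(F)`. -/
def ProperlyParametrized : Prop :=
  (⋃ a : M.A, M.G0 a) = M.GF ∧ ∀ a b : M.A, a ≠ b → Disjoint (M.G0 a) (M.G0 b)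

/-- The forward trajectory space `X`. -/
def X : Set (ℕ → ℝ) :=
  {x | (∀ k, x k ∈ Set.Icc (0 : ℝ) 1) ∧ ∀ k, (x k, x (k + 1)) ∈ M.GF}

/-- The left-shift map `T` on the forward trajectory space. -/
def shift : M.X → M.X :=
  fun x => ⟨fun k => x.1 (k + 1), ⟨fun k => x.2.1 (k + 1), fun k => x.2.2 (k + 1)⟩⟩

/-- The inverse trajectory (inverse limit) space `Y`, encoded by `y k = y_{-k}`. -/
def Y : Set (ℕ → ℝ) :=
  {y | (∀ k, y k ∈ Set.Icc (0 : ℝ) 1) ∧ ∀ k, (y (k + 1), y k) ∈ M.GF}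

/-- The right-shift map `S` on the inverse limit space (in the encoding `y k = y_{-k}`). -/
def ishift : M.Y → M.Y :=
  fun y => ⟨fun k => y.1 (k + 1), ⟨fun k => y.2.1 (k + 1), fun k => y.2.2 (k + 1)⟩⟩

/-- The space `X_n` of finite trajectories of length `n`. -/
def finTraj (n : ℕ) : Set (Fin n → ℝ) :=
  {x | (∀ i, x i ∈ Set.Icc (0 : ℝ) 1) ∧
    ∀ i : Fin n, ∀ h : (i : ℕ) + 1 < n, (x i, x ⟨(i : ℕ) + 1, h⟩) ∈ M.GF}

/-- The associated nearest-neighbor SFT `Σ_M`. -/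
def SFT : Set (ℕ → M.A) := {a | ∀ n : ℕ, M.D0 (a (n + 1)) ⊆ M.R0 (a n)}

/-- The word `u` (of length `n`) occurs in some point of `Z`. -/
def WordIn {n : ℕ} (u : Fin n → M.A) (Z : Set (ℕ → M.A)) : Prop :=
  ∃ z ∈ Z, ∃ m : ℕ, ∀ i : Fin n, u i = z (m + (i : ℕ))

/-- `L_n`, the words of length `n` in the language of `Σ_M`. -/
def Lang (n : ℕ) : Set (Fin n → M.A) := {u | M.WordIn u M.SFT}

/-- `(x,u)` is a labeled finite trajectory: `(x_k, x_{k+1}) ∈ G(u_k)` for all `k`. -/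
def Labeled {n : ℕ} (x : Fin (n + 1) → ℝ) (u : Fin n → M.A) : Prop :=
  ∀ i : Fin n, (x i.castSucc, x i.succ) ∈ M.Gr (u i)

/-- `(x,u)` is a special labeled finite trajectory: `(x_k, x_{k+1}) ∈ G₀(u_k)` for all `k`. -/
def SpecialLabeled {n : ℕ} (x : Fin (n + 1) → ℝ) (u : Fin n → M.A) : Prop :=
  ∀ i : Fin n, (x i.castSucc, x i.succ) ∈ M.G0 (u i)

/-- A word `u ∈ L_n` is essential if the set of finite trajectories specially labeled
by `u` is open in `X_{n+1}`. -/
def EssentialWord {n : ℕ} (u : Fin n → M.A) : Prop :=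
  u ∈ M.Lang n ∧ IsOpen {x : M.finTraj (n + 1) | M.SpecialLabeled x.1 u}

/-- A symbol is essential if it appears in some essential word. -/
def EssentialSymbol (a : M.A) : Prop :=
  ∃ n : ℕ, ∃ u : Fin n → M.A, M.EssentialWord u ∧ ∃ i : Fin n, u i = a

/-- `A^(e)`, the set of essential symbols. -/
def Ess : Set M.A := {a | M.EssentialSymbol a}

/-- `E`, the set of essential symbolic sequences. -/
def E : Set (ℕ → M.A) := {z ∈ M.SFT | ∀ i : ℕ, z i ∈ M.Ess}

/-- A word all of whose letters lie in `C`, in the language of `Σ_M`. -/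
def WordOver {n : ℕ} (u : Fin n → M.A) (C : Set M.A) : Prop :=
  u ∈ M.Lang n ∧ ∀ i, u i ∈ C

/-- There is a word of length `n+1` over `C` beginning with `a` and ending with `b`. -/
def WordFromTo (C : Set M.A) (a b : M.A) (n : ℕ) : Prop :=
  ∃ u : Fin (n + 1) → M.A, M.WordOver u C ∧ u 0 = a ∧ u (Fin.last n) = b

/-- `C ⊆ A` is irreducible. -/
def IrreducibleSet (C : Set M.A) : Prop :=
  ∀ a ∈ C, ∀ b ∈ C, ∃ n : ℕ, M.WordFromTo C a b n

/-- `C` is an irreducible component (a maximal irreducible subset of `A`). -/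
def IrreducibleComponent (C : Set M.A) : Prop :=
  M.IrreducibleSet C ∧ ∀ C' : Set M.A, M.IrreducibleSet C' → C ⊆ C' → C' = C

/-- `C ⊆ A` is mixing. -/
def MixingSet (C : Set M.A) : Prop :=
  ∃ N : ℕ, 1 ≤ N ∧ ∀ a ∈ C, ∀ b ∈ C, ∀ n : ℕ, N ≤ n + 1 → M.WordFromTo C a b n

/-- `C` is a mixing component (a maximal mixing subset of `A`). -/
def MixingComponent (C : Set M.A) : Prop :=
  M.MixingSet C ∧ ∀ C' : Set M.A, M.MixingSet C' → C ⊆ C' → C' = C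

/-- The Irreducibility Condition (IC). -/
def IC : Prop := ∃ C : Set M.A, M.IrreducibleComponent C ∧ M.Ess ⊆ C

/-- The Mixing Condition (MC). -/
def MC : Prop := ∃ C : Set M.A, M.MixingComponent C ∧ M.Ess ⊆ C

/-- `Z` is a subshift of `Σ_M`: shift-invariant and closed in the product of discrete
topologies (closedness phrased combinatorially). -/
def IsSubshift (Z : Set (ℕ → M.A)) : Prop :=
  Z ⊆ M.SFT ∧ (∀ z ∈ Z, (fun k => z (k + 1)) ∈ Z) ∧
  ∀ x : ℕ → M.A, (∀ n : ℕ, ∃ z ∈ Z, ∀ i, i < n → z i = x i) → x ∈ Z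

/-- The symbol `a` occurs in some point of `Z`. -/
def SymbolInShift (Z : Set (ℕ → M.A)) (a : M.A) : Prop := ∃ z ∈ Z, ∃ k : ℕ, z k = a

/-- `Z` is transitive on symbols. -/
def TransitiveOnSymbols (Z : Set (ℕ → M.A)) : Prop :=
  ∀ a b : M.A, M.SymbolInShift Z a → M.SymbolInShift Z b →
    ∃ z ∈ Z, ∃ m n : ℕ, z m = a ∧ z (m + n) = b

end MarkovMultiMap

/-- The composition `g_{u₀} ∘ ⋯ ∘ g_{u_n}` of inverse maps along a list of symbols. -/
def gWordList (M : MarkovMultiMap) : List M.A → ℝ → ℝ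
  | [], x => x
  | a :: l, x => M.g a (gWordList M l x)

namespace MarkovMultiMap

/-- The inverse map `g_u` associated to a word `u = u₀⋯u_n`. -/
def gWord (M : MarkovMultiMap) {n : ℕ} (u : Fin (n + 1) → M.A) : ℝ → ℝ :=
  gWordList M (List.ofFn u)

/-- The interval `I_u = g_u(R(u_n))`. -/
def Iword (M : MarkovMultiMap) {n : ℕ} (u : Fin (n + 1) → M.A) : Set ℝ :=
  M.gWord u '' M.R (u (Fin.last n))

/-- The Coding Condition (CC). -/
def CC (M : MarkovMultiMap) : Prop :=
  ∃ Z : Set (ℕ → M.A), M.IsSubshift Z ∧ M.TransitiveOnSymbols Z ∧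
    (∀ y ∈ Set.Icc (0 : ℝ) 1, ∃ a ∈ Z, ∃ x ∈ M.X, x 0 = y ∧
      ∀ i : ℕ, (x i, x (i + 1)) ∈ M.Gr (a i)) ∧
    (∀ ε : ℝ, 0 < ε → ∃ N : ℕ, ∀ n : ℕ, N ≤ n → ∀ u : Fin (n + 1) → M.A,
      M.WordIn u Z → intervalLen (M.Iword u) < ε)

/-- Uniform equicontinuity of the family `{g_u : u ∈ L(C)}`. -/
def UnifEquicontOn (M : MarkovMultiMap) (C : Set M.A) : Prop :=
  ∀ ε : ℝ, 0 < ε → ∃ δ : ℝ, 0 < δ ∧ ∀ n : ℕ, ∀ u : Fin (n + 1) → M.A, M.WordOver u C →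
    ∀ x ∈ M.R (u (Fin.last n)), ∀ y ∈ M.R (u (Fin.last n)),
      |x - y| < δ → |M.gWord u x - M.gWord u y| < ε

end MarkovMultiMap


/-!
Since `F` is properly parametrized, every trajectory has a unique itinerary in `Σ_M`, read off
from the partition `{G₀(a)}`, and an essential word `u` defines a nonempty open cylinder of
trajectories whose itinerary starts with `u`. Transitivity of the shift moves the cylinder of an
essential word containing `a` into that of an essential word containing `b`, so an itinerary leads
from the first letter of the first word to `b`; a return of the first cylinder to itself makes the
first word periodic along an itinerary, which leads from `a` back to that first letter. Thus all
essential symbols lie in one communicating class of `Σ_M`, and this class is contained in an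
irreducible component.
-/

open Function

section Sequences

variable {β : Type*}

def seqSplice (x y : ℕ → β) (n : ℕ) : ℕ → β := fun k => if k ≤ n then x k else y (k - n)

theorem seqSplice_of_le {x y : ℕ → β} {n k : ℕ} (hk : k ≤ n) : seqSplice x y n k = x k :=
  if_pos hk

theorem seqSplice_of_ge {x y : ℕ → β} {n k : ℕ} (hxy : x n = y 0) (hk : n ≤ k) :
    seqSplice x y n k = y (k - n) := by
  rcases hk.eq_or_lt with rfl | hlt
  · simp [seqSplice, hxy]
  · exact if_neg hlt.not_ge

theorem seqSplice_chain {r : β → β → Prop} {x y : ℕ → β} {n : ℕ}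
    (hx : ∀ k < n, r (x k) (x (k + 1))) (hy : ∀ k, r (y k) (y (k + 1))) (hxy : x n = y 0)
    (k : ℕ) : r (seqSplice x y n k) (seqSplice x y n (k + 1)) := by
  rcases lt_or_ge k n with hk | hk
  · rw [seqSplice_of_le hk.le, seqSplice_of_le hk]
    exact hx k hk
  · rw [seqSplice_of_ge hxy hk, seqSplice_of_ge hxy (by omega), Nat.sub_add_comm hk]
    exact hy _

theorem apply_mod_eq_of_apply_add_eq {w : ℕ → β} {n t : ℕ} (h : ∀ k < n, w (k + t) = w k)
    {k : ℕ} (hk : k < n) : w (k % t) = w k := by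
  have key : ∀ q r, r + t * q < n → w r = w (r + t * q) := by
    intro q r
    induction q with
    | zero => simp
    | succ q ih =>
      intro hq
      rw [ih (by nlinarith), mul_add, mul_one, ← add_assoc, h _ (by nlinarith)]
  conv_rhs => rw [← Nat.mod_add_div k t]
  exact key _ _ (by rwa [Nat.mod_add_div])

end Sequences

theorem ContinuousOn.mem_Ioo_iff_of_bijOn_Icc {α δ : Type*} [ConditionallyCompleteLinearOrder α]
    [TopologicalSpace α] [OrderTopology α] [DenselyOrdered α] [LinearOrder δ]
    [TopologicalSpace δ] [OrderClosedTopology δ] {f : α → δ} {p q x : α} {u v : δ}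
    (hpq : p ≤ q) (hc : ContinuousOn f (Icc p q)) (hb : BijOn f (Icc p q) (Icc u v))
    (hx : x ∈ Icc p q) : x ∈ Ioo p q ↔ f x ∈ Ioo u v := by
  have hp := left_mem_Icc.2 hpq
  have hq := right_mem_Icc.2 hpq
  have huv : u ≤ v := (hb.mapsTo hp).1.trans (hb.mapsTo hp).2
  obtain ⟨pu, hpu, hfpu⟩ := hb.surjOn (left_mem_Icc.2 huv)
  obtain ⟨pv, hpv, hfpv⟩ := hb.surjOn (right_mem_Icc.2 huv)
  rcases hc.strictMonoOn_of_injOn_Icc' hpq hb.injOn with hm | ha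
  · have hfp : f p = u := le_antisymm (hfpu ▸ hm.monotoneOn hp hpu hpu.1) (hb.mapsTo hp).1
    have hfq : f q = v := le_antisymm (hb.mapsTo hq).2 (hfpv ▸ hm.monotoneOn hpv hq hpv.2)
    rw [mem_Ioo, mem_Ioo, ← hfp, ← hfq, hm.lt_iff_lt hp hx, hm.lt_iff_lt hx hq]
  · have hfp : f p = v := le_antisymm (hb.mapsTo hp).2 (hfpv ▸ ha.antitoneOn hp hpv hpv.1)
    have hfq : f q = u := le_antisymm (hfpu ▸ ha.antitoneOn hpu hq hpu.2) (hb.mapsTo hq).1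
    rw [mem_Ioo, mem_Ioo, ← hfp, ← hfq, ha.lt_iff_gt hq hx, ha.lt_iff_gt hx hp, and_comm]

theorem TopTransitive.exists_pos_iterate_mem {α : Type*} [TopologicalSpace α] [T2Space α]
    {T : α → α} (htt : TopTransitive T) (hT : Continuous T) {U : Set α} (hU : IsOpen U)
    (hne : U.Nonempty) : ∃ t, 0 < t ∧ ∃ x ∈ U, T^[t] x ∈ U := by
  by_cases hpre : (T ⁻¹' U).Nonempty
  · obtain ⟨t, -, ⟨x, hx, rfl⟩, hxt⟩ := htt U (T ⁻¹' U) hU (hU.preimage hT) hne hpre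
    exact ⟨t + 1, t.succ_pos, x, hx, by rwa [iterate_succ_apply']⟩
  · -- Nothing is mapped into `U`, so orbits from `A ∋ T x` can meet `U ∩ B ∋ x` only at time `0`.
    exfalso
    obtain ⟨x, hx⟩ := hne
    have hTx : T x ≠ x := fun h => hpre ⟨x, by rwa [mem_preimage, h]⟩
    obtain ⟨A, B, hA, hB, hxA, hxB, hAB⟩ := t2_separation hTx
    obtain ⟨t, -, ⟨a, ha, rfl⟩, haU, haB⟩ := htt A (U ∩ B) hA (hU.inter hB) ⟨_, hxA⟩ ⟨x, hx, hxB⟩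
    cases t with
    | zero => exact disjoint_left.1 hAB ha haB
    | succ t => exact hpre ⟨_, by rwa [mem_preimage, ← iterate_succ_apply' T]⟩

namespace MarkovMultiMap

variable (M : MarkovMultiMap)

theorem D_subset_Icc (a : M.A) : M.D a ⊆ Icc 0 1 := by
  rw [M.cover]
  exact subset_iUnion M.D a

theorem exists_R_eq_Icc (a : M.A) : ∃ u ∈ M.P, ∃ v ∈ M.P, u ≤ v ∧ M.R a = Icc u v := by
  rcases M.A_cover a with ha | ha | ha
  · obtain ⟨u, hu, v, hv, huv, hR⟩ := M.R_A0 a ha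
    exact ⟨u, hu, v, hv, huv.le, hR⟩
  · obtain ⟨u, hu, v, hv, huv, hR, -⟩ := M.R_A1 a ha
    exact ⟨u, hu, v, hv, huv.le, hR⟩
  · obtain ⟨u, hu, hR⟩ := M.R_A2 a ha
    exact ⟨u, hu, u, hu, le_rfl, by rw [hR, Icc_self]⟩

theorem R_subset_Icc (a : M.A) : M.R a ⊆ Icc 0 1 := by
  obtain ⟨u, hu, v, hv, -, hR⟩ := M.exists_R_eq_Icc a
  rw [hR]
  exact Icc_subset_Icc (M.P_sub hu).1 (M.P_sub hv).2

theorem R_nonempty (a : M.A) : (M.R a).Nonempty := by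
  obtain ⟨u, -, v, -, huv, hR⟩ := M.exists_R_eq_Icc a
  rw [hR]
  exact nonempty_Icc.2 huv

theorem exists_R0_eq (a : M.A) : ∃ u ∈ M.P, ∃ v ∈ M.P, M.R0 a = Ioo u v ∨ M.R0 a = {u} := by
  rcases M.A_cover a with ha | ha | ha
  · obtain ⟨u, hu, v, hv, -, hR⟩ := M.R_A0 a ha
    exact ⟨u, hu, v, hv, Or.inl (by rw [M.R0_A01 a (mem_union_left _ ha), hR, interior_Icc])⟩
  · obtain ⟨u, hu, v, hv, -, hR, -⟩ := M.R_A1 a ha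
    exact ⟨u, hu, v, hv, Or.inl (by rw [M.R0_A01 a (mem_union_right _ ha), hR, interior_Icc])⟩
  · obtain ⟨u, hu, hR⟩ := M.R_A2 a ha
    exact ⟨u, hu, u, hu, Or.inr (by rw [M.R0_A2 a ha, hR])⟩

theorem D0_subset_D (a : M.A) : M.D0 a ⊆ M.D a := by
  by_cases ha : a ∈ M.A0
  · rw [M.D0_A0 a ha]
    exact interior_subset
  · rw [M.D0_A12 a ((M.A_cover a).resolve_left ha)]

theorem R0_subset_R (a : M.A) : M.R0 a ⊆ M.R a := by
  by_cases ha : a ∈ M.A2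
  · rw [M.R0_A2 a ha]
  · rw [M.R0_A01 a ((M.A_cover a).imp_right (Or.resolve_right · ha))]
    exact interior_subset

theorem D0_nonempty (a : M.A) : (M.D0 a).Nonempty := by
  by_cases ha : a ∈ M.A0
  · obtain ⟨p, -, q, -, hpq, -, hD⟩ := M.D_A0 a ha
    rw [M.D0_A0 a ha, hD, interior_Icc]
    exact nonempty_Ioo.2 hpq
  · have ha' := (M.A_cover a).resolve_left ha
    obtain ⟨p, -, hD⟩ := M.D_A12 a ha'
    rw [M.D0_A12 a ha', hD]
    exact singleton_nonempty p

theorem G0_subset_Gr (a : M.A) : M.G0 a ⊆ M.Gr a := by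
  rcases M.A_cover a with ha | ha | ha
  · rw [M.G0_A0 a ha, M.Gr_A0 a ha]
    exact fun q hq => ⟨M.D0_subset_D a hq.1, hq.2⟩
  · rw [M.G0_A1 a ha, M.Gr_A12 a (mem_union_left _ ha)]
    exact prod_mono subset_rfl (M.R0_subset_R a)
  · rw [M.G0_A2 a ha]

theorem Gr_subset_prod (a : M.A) : M.Gr a ⊆ M.D a ×ˢ M.R a := by
  by_cases ha : a ∈ M.A0
  · rw [M.Gr_A0 a ha]
    rintro ⟨x, y⟩ ⟨hx, hy⟩
    exact ⟨hx, hy ▸ (M.f_homeo a ha).2.mapsTo hx⟩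
  · rw [M.Gr_A12 a ((M.A_cover a).resolve_left ha)]

theorem GF_subset_Icc_prod : M.GF ⊆ Icc 0 1 ×ˢ Icc 0 1 :=
  iUnion_subset fun a =>
    (M.Gr_subset_prod a).trans (prod_mono (M.D_subset_Icc a) (M.R_subset_Icc a))

theorem mem_X_iff {x : ℕ → ℝ} : x ∈ M.X ↔ ∀ k, (x k, x (k + 1)) ∈ M.GF :=
  ⟨And.right, fun h => ⟨fun k => (M.GF_subset_Icc_prod (h k)).1, h⟩⟩

theorem exists_mem_X_apply_zero {y : ℝ} (hy : y ∈ Icc (0 : ℝ) 1) : ∃ x ∈ M.X, x 0 = y := by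
  have hnext : ∀ p : Icc (0 : ℝ) 1, ∃ p' : Icc (0 : ℝ) 1, ((p : ℝ), (p' : ℝ)) ∈ M.GF := by
    rintro ⟨p, hp⟩
    rw [M.cover] at hp
    obtain ⟨a, hpa⟩ := mem_iUnion.1 hp
    by_cases ha : a ∈ M.A0
    · have hfp := (M.f_homeo a ha).2.mapsTo hpa
      refine ⟨⟨M.f a p, M.R_subset_Icc a hfp⟩, mem_iUnion.2 ⟨a, ?_⟩⟩
      rw [M.Gr_A0 a ha]
      exact ⟨hpa, rfl⟩
    · obtain ⟨p', hp'⟩ := M.R_nonempty a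
      refine ⟨⟨p', M.R_subset_Icc a hp'⟩, mem_iUnion.2 ⟨a, ?_⟩⟩
      rw [M.Gr_A12 a ((M.A_cover a).resolve_left ha)]
      exact ⟨hpa, hp'⟩
  choose next hnext using hnext
  refine ⟨fun k => (next^[k] ⟨y, hy⟩ : ℝ), M.mem_X_iff.2 fun k => ?_, rfl⟩
  simpa only [iterate_succ_apply'] using hnext _

theorem mem_D0_iff_of_mem_A0 {a : M.A} (ha : a ∈ M.A0) {x : ℝ} (hx : x ∈ M.D a) :
    x ∈ M.D0 a ↔ M.f a x ∈ M.R0 a := by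
  obtain ⟨p, -, q, -, hpq, -, hD⟩ := M.D_A0 a ha
  obtain ⟨u, -, v, -, -, hR⟩ := M.R_A0 a ha
  obtain ⟨hc, hb⟩ := M.f_homeo a ha
  rw [hD] at hx hc
  rw [hD, hR] at hb
  rw [M.D0_A0 a ha, M.R0_A01 a (mem_union_left _ ha), hD, hR, interior_Icc, interior_Icc]
  exact hc.mem_Ioo_iff_of_bijOn_Icc hpq.le hb hx

theorem mem_D0_of_mem_G0 {a : M.A} {x y : ℝ} (h : (x, y) ∈ M.G0 a) : x ∈ M.D0 a := by
  rcases M.A_cover a with ha | ha | ha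
  · rw [M.G0_A0 a ha] at h
    exact h.1
  · rw [M.G0_A1 a ha, ← M.D0_A12 a (mem_union_left _ ha)] at h
    exact h.1
  · rw [M.G0_A2 a ha, M.Gr_A12 a (mem_union_right _ ha), ← M.D0_A12 a (mem_union_right _ ha)] at h
    exact h.1

theorem mem_R0_of_mem_G0 {a : M.A} {x y : ℝ} (h : (x, y) ∈ M.G0 a) : y ∈ M.R0 a := by
  rcases M.A_cover a with ha | ha | ha
  · rw [M.G0_A0 a ha] at h
    obtain ⟨hx, hy : y = M.f a x⟩ := h
    exact hy ▸ (M.mem_D0_iff_of_mem_A0 ha (M.D0_subset_D a hx)).1 hx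
  · rw [M.G0_A1 a ha] at h
    exact h.2
  · rw [M.G0_A2 a ha, M.Gr_A12 a (mem_union_right _ ha), ← M.R0_A2 a ha] at h
    exact h.2

theorem exists_mem_G0_of_mem_R0 {a : M.A} {y : ℝ} (hy : y ∈ M.R0 a) : ∃ x, (x, y) ∈ M.G0 a := by
  rcases M.A_cover a with ha | ha | ha
  · obtain ⟨hgD, hfg⟩ := (M.g_A0 a ha).2 y (M.R0_subset_R a hy)
    refine ⟨M.g a y, ?_⟩
    rw [M.G0_A0 a ha]
    exact ⟨(M.mem_D0_iff_of_mem_A0 ha hgD).2 (hfg.symm ▸ hy), hfg.symm⟩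
  · obtain ⟨x, hx⟩ := M.D0_nonempty a
    refine ⟨x, ?_⟩
    rw [M.G0_A1 a ha]
    exact ⟨M.D0_subset_D a hx, hy⟩
  · obtain ⟨x, hx⟩ := M.D0_nonempty a
    refine ⟨x, ?_⟩
    rw [M.G0_A2 a ha, M.Gr_A12 a (mem_union_right _ ha), ← M.R0_A2 a ha]
    exact ⟨M.D0_subset_D a hx, hy⟩

theorem D0_subset_R0_of_mem {b c : M.A} {x : ℝ} (hb : x ∈ M.D0 b) (hc : x ∈ M.R0 c) :
    M.D0 b ⊆ M.R0 c := by
  by_cases hb0 : b ∈ M.A0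
  · obtain ⟨p, -, q, -, -, hP, hD⟩ := M.D_A0 b hb0
    rw [M.D0_A0 b hb0, hD, interior_Icc] at hb ⊢
    obtain ⟨u, hu, v, hv, hR0 | hR0⟩ := M.exists_R0_eq c <;> rw [hR0] at hc ⊢
    · exact Ioo_subset_Ioo (not_lt.1 fun h => hP u hu ⟨h, hc.1.trans hb.2⟩)
        (not_lt.1 fun h => hP v hv ⟨hb.1.trans hc.2, h⟩)
    · exact absurd (hc ▸ hb) (hP u hu)
  · have hb12 := (M.A_cover b).resolve_left hb0
    obtain ⟨p, -, hD⟩ := M.D_A12 b hb12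
    rw [M.D0_A12 b hb12, hD] at hb ⊢
    rwa [singleton_subset_iff, ← mem_singleton_iff.1 hb]

theorem exists_itinerary (hpp : M.ProperlyParametrized) (x : M.X) :
    ∃ z ∈ M.SFT, ∀ k, (x.1 k, x.1 (k + 1)) ∈ M.G0 (z k) := by
  have hcover : ∀ k, ∃ a, (x.1 k, x.1 (k + 1)) ∈ M.G0 a := fun k =>
    mem_iUnion.1 (hpp.1.symm ▸ x.2.2 k)
  choose z hz using hcover
  exact ⟨z, fun k => M.D0_subset_R0_of_mem (M.mem_D0_of_mem_G0 (hz (k + 1)))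
    (M.mem_R0_of_mem_G0 (hz k)), hz⟩

theorem eq_of_mem_G0 (hpp : M.ProperlyParametrized) {a b : M.A} {q : ℝ × ℝ}
    (ha : q ∈ M.G0 a) (hb : q ∈ M.G0 b) : a = b :=
  by_contra fun hab => disjoint_left.1 (hpp.2 a b hab) ha hb

theorem exists_G0_chain {z : ℕ → M.A} (hz : z ∈ M.SFT) (N : ℕ) {y : ℝ} (hy : y ∈ M.D0 (z N)) :
    ∃ xs : ℕ → ℝ, xs N = y ∧ ∀ k < N, (xs k, xs (k + 1)) ∈ M.G0 (z k) := by
  induction N generalizing y with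
  | zero => exact ⟨fun _ => y, rfl, fun k hk => absurd hk k.not_lt_zero⟩
  | succ N ih =>
    obtain ⟨w, hw⟩ := M.exists_mem_G0_of_mem_R0 (hz N hy)
    obtain ⟨xs, hxsN, hxs⟩ := ih (M.mem_D0_of_mem_G0 hw)
    refine ⟨update xs (N + 1) y, update_self .., fun k hk => ?_⟩
    rw [update_of_ne (by omega)]
    rcases (Nat.lt_succ_iff.1 hk).lt_or_eq with hk | rfl
    · rw [update_of_ne (by omega)]
      exact hxs k hk
    · rwa [update_self, hxsN]

def labelCylinder {n : ℕ} (u : Fin n → M.A) : Set M.X :=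
  {x | M.SpecialLabeled (fun i : Fin (n + 1) => x.1 i) u}

theorem mem_labelCylinder {n : ℕ} {u : Fin n → M.A} {x : M.X} :
    x ∈ M.labelCylinder u ↔ ∀ i : Fin n, (x.1 i, x.1 (i + 1)) ∈ M.G0 (u i) := by
  simp [labelCylinder, SpecialLabeled]

theorem isOpen_labelCylinder {n : ℕ} {u : Fin n → M.A} (hu : M.EssentialWord u) :
    IsOpen (M.labelCylinder u) := by
  let restrict : M.X → M.finTraj (n + 1) := fun x =>
    ⟨fun i => x.1 i, fun i => x.2.1 i, fun i _ => x.2.2 i⟩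
  have hcont : Continuous restrict := by
    apply Continuous.subtype_mk
    exact continuous_pi fun i => (continuous_apply _).comp continuous_subtype_val
  exact hu.2.preimage hcont

theorem labelCylinder_nonempty {n : ℕ} {u : Fin n → M.A} (hu : u ∈ M.Lang n) :
    (M.labelCylinder u).Nonempty := by
  obtain ⟨z, hz, m, hzu⟩ := hu
  have hz' : (fun k => z (m + k)) ∈ M.SFT := fun k => hz (m + k)
  obtain ⟨y, hy⟩ := M.D0_nonempty (z (m + n))
  obtain ⟨xs, hxsn, hxs⟩ := M.exists_G0_chain hz' n hy
  obtain ⟨x, hx, hx0⟩ := M.exists_mem_X_apply_zero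
    (M.D_subset_Icc _ (M.D0_subset_D _ (hxsn ▸ hy)))
  have hsplice : seqSplice xs x n ∈ M.X := M.mem_X_iff.2 <|
    seqSplice_chain (r := fun p q => (p, q) ∈ M.GF)
      (fun k hk => mem_iUnion.2 ⟨_, M.G0_subset_Gr _ (hxs k hk)⟩)
      (M.mem_X_iff.1 hx) hx0.symm
  refine ⟨⟨_, hsplice⟩, M.mem_labelCylinder.2 fun i => ?_⟩
  dsimp only
  rw [seqSplice_of_le i.isLt.le, seqSplice_of_le i.isLt, hzu]
  exact hxs i i.isLt

theorem continuous_shift : Continuous M.shift := by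
  apply Continuous.subtype_mk
  exact continuous_pi fun k => (continuous_apply (k + 1)).comp continuous_subtype_val

theorem shift_iterate_apply (t : ℕ) (x : M.X) (k : ℕ) : (M.shift^[t] x).1 k = x.1 (k + t) := by
  induction t generalizing x with
  | zero => rfl
  | succ t ih =>
    rw [iterate_succ_apply, ih]
    rfl

theorem itinerary_add_eq_of_iterate_mem_labelCylinder (hpp : M.ProperlyParametrized) {x : M.X}
    {z : ℕ → M.A} (hz : ∀ k, (x.1 k, x.1 (k + 1)) ∈ M.G0 (z k)) {t n : ℕ} {u : Fin n → M.A}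
    (hx : M.shift^[t] x ∈ M.labelCylinder u) (i : Fin n) : z (i + t) = u i := by
  have hi := M.mem_labelCylinder.1 hx i
  rw [shift_iterate_apply, shift_iterate_apply, add_right_comm] at hi
  exact M.eq_of_mem_G0 hpp (hz _) hi

def Reaches (a b : M.A) : Prop :=
  ∃ z ∈ M.SFT, ∃ s t, s ≤ t ∧ z s = a ∧ z t = b

section

variable {M}

theorem Reaches.trans {a b c : M.A} (hab : M.Reaches a b) (hbc : M.Reaches b c) :
    M.Reaches a c := by
  obtain ⟨z, hz, s, t, hst, rfl, rfl⟩ := hab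
  obtain ⟨z', hz', s', t', hst', hzs', rfl⟩ := hbc
  have hglue : z t = z' (s' + 0) := hzs'.symm
  refine ⟨seqSplice z (fun k => z' (s' + k)) t,
    seqSplice_chain (r := fun a b => M.D0 b ⊆ M.R0 a) (fun k _ => hz k) (fun k => hz' (s' + k))
      hglue, s, t + (t' - s'), by omega, seqSplice_of_le hst, ?_⟩
  rw [seqSplice_of_ge hglue (by omega)]
  congr 1
  omega

end

theorem reaches_of_essentialWord (hpp : M.ProperlyParametrized) (htrans : TopTransitive M.shift)
    {n : ℕ} {u : Fin n → M.A} (hu : M.EssentialWord u) (i j : Fin n) : M.Reaches (u i) (u j) := by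
  obtain ⟨t, ht, x, hx, hxt⟩ := htrans.exists_pos_iterate_mem M.continuous_shift
    (M.isOpen_labelCylinder hu) (M.labelCylinder_nonempty hu.1)
  obtain ⟨w, hw, hwx⟩ := M.exists_itinerary hpp x
  have hw0 := M.itinerary_add_eq_of_iterate_mem_labelCylinder hpp hwx (t := 0) hx
  have hwt := M.itinerary_add_eq_of_iterate_mem_labelCylinder hpp hwx hxt
  -- `w` is `t`-periodic along `u`, so `u i` also occurs at `i % t < t ≤ j + t`.
  have hper : w (i % t) = u i := by
    rw [apply_mod_eq_of_apply_add_eq (fun k hk => (hwt ⟨k, hk⟩).trans (hw0 ⟨k, hk⟩).symm) i.isLt]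
    exact hw0 i
  exact ⟨w, hw, i % t, j + t, (Nat.mod_lt _ ht).le.trans (Nat.le_add_left _ _), hper, hwt j⟩

theorem reaches_of_essentialSymbol (hpp : M.ProperlyParametrized)
    (htrans : TopTransitive M.shift) {a b : M.A} (ha : M.EssentialSymbol a)
    (hb : M.EssentialSymbol b) : M.Reaches a b := by
  obtain ⟨n, u, hu, i, rfl⟩ := ha
  obtain ⟨m, v, hv, j, rfl⟩ := hb
  obtain ⟨t, -, ⟨x, hx, rfl⟩, hxt⟩ := htrans _ _ (M.isOpen_labelCylinder hu)
    (M.isOpen_labelCylinder hv) (M.labelCylinder_nonempty hu.1) (M.labelCylinder_nonempty hv.1)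
  obtain ⟨z, hz, hzx⟩ := M.exists_itinerary hpp x
  have hz0 := M.itinerary_add_eq_of_iterate_mem_labelCylinder hpp hzx (t := 0) hx
  have hzt := M.itinerary_add_eq_of_iterate_mem_labelCylinder hpp hzx hxt
  refine (M.reaches_of_essentialWord hpp htrans hu i ⟨0, i.pos⟩).trans ?_
  exact ⟨z, hz, 0, j + t, Nat.zero_le _, hz0 ⟨0, i.pos⟩, hzt j⟩

def commClass (e : M.A) : Set M.A := {c | M.Reaches e c ∧ M.Reaches c e}

theorem irreducibleSet_commClass (e : M.A) : M.IrreducibleSet (M.commClass e) := by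
  rintro a ⟨hea, hae⟩ b ⟨heb, hbe⟩
  obtain ⟨z, hz, s, t, hst, rfl, rfl⟩ := hae.trans heb
  have hreach : ∀ {k l}, k ≤ l → M.Reaches (z k) (z l) := fun hkl => ⟨z, hz, _, _, hkl, rfl, rfl⟩
  refine ⟨t - s, fun i => z (s + i), ⟨⟨z, hz, s, fun i => rfl⟩, fun i => ?_⟩, rfl, ?_⟩
  · have hi := i.isLt
    exact ⟨hea.trans (hreach (by omega)), (hreach (by omega)).trans hbe⟩
  · simp only [Fin.val_last]
    congr 1
    omega

theorem exists_irreducibleComponent_superset {C : Set M.A} (hC : M.IrreducibleSet C) :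
    ∃ C', M.IrreducibleComponent C' ∧ C ⊆ C' := by
  have := M.finA
  obtain ⟨C', hCC', hmax⟩ := Finite.exists_le_maximal (p := M.IrreducibleSet) hC
  exact ⟨C', ⟨hmax.1, fun D hD hC'D => (hmax.2 hD hC'D).antisymm hC'D⟩, hCC'⟩

end MarkovMultiMap

/-- If the forward trajectory system `(X,T)` of a properly parametrized Markov
multi-map is topologically transitive, then `Σ_M` satisfies the
Irreducibility Condition (IC). -/
theorem stmt0 (M : MarkovMultiMap) (hpp : M.ProperlyParametrized)
    (htrans : TopTransitive M.shift) : M.IC := by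
  rcases M.Ess.eq_empty_or_nonempty with hEss | ⟨e, he⟩
  · obtain ⟨C, hC, -⟩ :=
      M.exists_irreducibleComponent_superset (C := ∅) fun _ h => (notMem_empty _ h).elim
    exact ⟨C, hC, hEss ▸ empty_subset C⟩
  · obtain ⟨C, hC, hsub⟩ := M.exists_irreducibleComponent_superset (M.irreducibleSet_commClass e)
    exact ⟨C, hC, fun a ha => hsub ⟨M.reaches_of_essentialSymbol hpp htrans he ha,
      M.reaches_of_essentialSymbol hpp htrans ha he⟩⟩
end

section
/- Let F be a properly parametrized Markov multi-map and let u=u₀⋯u_{n−1}∈L_n be a word of the associated SFT. If u_{n−1}∈A₀∪A₁, then u is essential. In particular, A₀∪A₁ ⊆ A^(e). -/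
open Set Topology

/-!
For `a ∈ A₀ ∪ A₁` the piece `G₀(a)` is relatively open in `G(F)`: its points have a coordinate
outside `P` (the abscissa if `a ∈ A₀`, the ordinate if `a ∈ A₁`), whereas the pieces `G(b)` are
closed and `G(b) \ G₀(b) ⊆ P × P`, so by proper parametrization no point of `G₀(a)` is a limit of
`G(F) \ G₀(a)`. For `a ∈ A₂`, `G₀(a) = {(p, q)}` is not open, but the fibre of `G(F)` over `q` is
finite, so an edge of `G(F)` near `(p, q)` whose endpoint lies in `R₀(a) = {q}` is `(p, q)` itself.
Going backwards along a word whose last letter is in `A₀ ∪ A₁`, every edge of a nearby trajectory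
is thus forced into the right `G₀`, because its endpoint lies in `D₀(u_{k+1}) ⊆ R₀(u_k)`.
Finally every letter of `A₀ ∪ A₁` begins a point of `Σ_M`: the interval `R₀(b)` of such a letter
contains a point outside `P`, hence the whole `D₀(c)` of some `c ∈ A₀`.
-/

open Filter

section IntervalEndpoints

variable {α δ : Type*} [ConditionallyCompleteLinearOrder α] [DenselyOrdered α]
  [TopologicalSpace α] [OrderTopology α] [LinearOrder δ] [TopologicalSpace δ]
  [OrderClosedTopology δ]

theorem apply_endpoint_of_bijOn_Icc {f : α → δ} {p q : α} {u v : δ} (hpq : p ≤ q)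
    (hc : ContinuousOn f (Icc p q)) (hf : BijOn f (Icc p q) (Icc u v)) {x : α}
    (hx : x = p ∨ x = q) : f x = u ∨ f x = v := by
  have huv : u ≤ v := nonempty_Icc.1 (hf.image_eq ▸ (nonempty_Icc.2 hpq).image f)
  rcases hc.strictMonoOn_of_injOn_Icc' hpq hf.injOn with hmono | hanti <;>
    rcases hx with rfl | rfl
  · exact .inl ((hf.image_eq ▸ hmono.monotoneOn.map_isLeast (isLeast_Icc hpq)).unique
      (isLeast_Icc huv))
  · exact .inr ((hf.image_eq ▸ hmono.monotoneOn.map_isGreatest (isGreatest_Icc hpq)).unique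
      (isGreatest_Icc huv))
  · exact .inr ((hf.image_eq ▸ hanti.antitoneOn.map_isLeast (isLeast_Icc hpq)).unique
      (isGreatest_Icc huv))
  · exact .inl ((hf.image_eq ▸ hanti.antitoneOn.map_isGreatest (isGreatest_Icc hpq)).unique
      (isLeast_Icc huv))

end IntervalEndpoints

namespace MarkovMultiMap

variable {M : MarkovMultiMap}

theorem isClosed_Gr (a : M.A) : IsClosed (M.Gr a) := by
  rcases M.A_cover a with h | h | h
  · obtain ⟨p, -, q, -, -, -, hD⟩ := M.D_A0 a h
    have hgraph : M.Gr a = (fun s => (s, M.f a s)) '' M.D a := by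
      ext ⟨s, t⟩
      simp [M.Gr_A0 a h, eq_comm]
    rw [hgraph]
    exact ((hD ▸ isCompact_Icc).image_of_continuousOn
      (continuousOn_id.prodMk (M.f_homeo a h).1)).isClosed
  · obtain ⟨p, -, hD⟩ := M.D_A12 a (.inl h)
    obtain ⟨u, -, v, -, -, hR, -⟩ := M.R_A1 a h
    rw [M.Gr_A12 a (.inl h), hD, hR]
    exact isClosed_singleton.prod isClosed_Icc
  · obtain ⟨p, -, hD⟩ := M.D_A12 a (.inr h)
    obtain ⟨u, -, hR⟩ := M.R_A2 a h
    rw [M.Gr_A12 a (.inr h), hD, hR]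
    exact isClosed_singleton.prod isClosed_singleton

theorem Gr_diff_G0_subset (a : M.A) :
    M.Gr a \ M.G0 a ⊆ (M.P : Set ℝ) ×ˢ (M.P : Set ℝ) := by
  rintro ⟨s, t⟩ ⟨hGr, hG0⟩
  rcases M.A_cover a with h | h | h
  · obtain ⟨p, hp, q, hq, hpq, -, hD⟩ := M.D_A0 a h
    obtain ⟨u, hu, v, hv, -, hR⟩ := M.R_A0 a h
    rw [M.Gr_A0 a h] at hGr
    rw [M.G0_A0 a h, M.D0_A0 a h, hD, interior_Icc] at hG0
    obtain ⟨hsD, ht : t = M.f a s⟩ := hGr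
    subst ht
    have hs : s ∈ Icc p q \ Ioo p q := ⟨hD ▸ hsD, fun hs => hG0 ⟨hs, rfl⟩⟩
    rw [Icc_sdiff_Ioo_same hpq.le] at hs
    have hf := M.f_homeo a h
    rw [hD, hR] at hf
    refine ⟨by rcases hs with rfl | rfl <;> assumption, ?_⟩
    rcases apply_endpoint_of_bijOn_Icc hpq.le hf.1 hf.2 hs with hfs | hfs <;>
      simpa [hfs]
  · obtain ⟨p, hp, hD⟩ := M.D_A12 a (.inl h)
    obtain ⟨u, hu, v, hv, huv, hR, -⟩ := M.R_A1 a h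
    rw [M.Gr_A12 a (.inl h), hD, hR] at hGr
    rw [M.G0_A1 a h, M.R0_A01 a (.inr h), hD, hR, interior_Icc] at hG0
    have ht : t ∈ Icc u v \ Ioo u v := ⟨hGr.2, fun ht => hG0 ⟨hGr.1, ht⟩⟩
    rw [Icc_sdiff_Ioo_same huv.le] at ht
    refine ⟨(mem_singleton_iff.1 hGr.1) ▸ hp, ?_⟩
    rcases ht with rfl | rfl <;> assumption
  · exact absurd (M.G0_A2 a h ▸ hGr) hG0

theorem disjoint_G0_P_prod {a : M.A} (ha : a ∈ M.A0 ∪ M.A1) :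
    Disjoint (M.G0 a) ((M.P : Set ℝ) ×ˢ (M.P : Set ℝ)) := by
  rw [disjoint_left]
  rintro ⟨s, t⟩ hG0 ⟨hs, ht⟩
  rcases ha with h | h
  · obtain ⟨p, -, q, -, -, hgap, hD⟩ := M.D_A0 a h
    rw [M.G0_A0 a h, M.D0_A0 a h, hD, interior_Icc] at hG0
    exact hgap s hs hG0.1
  · obtain ⟨u, -, v, -, -, hR, hRP⟩ := M.R_A1 a h
    rw [M.G0_A1 a h, M.R0_A01 a (.inr h), hR, interior_Icc] at hG0
    have htuv : t ∈ ({u, v} : Set ℝ) := hRP ▸ ⟨Ioo_subset_Icc_self hG0.2, ht⟩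
    rcases htuv with rfl | rfl
    · exact hG0.2.1.false
    · exact hG0.2.2.false

theorem G0_mem_nhdsWithin_GF (hpp : M.ProperlyParametrized) {a : M.A} (ha : a ∈ M.A0 ∪ M.A1)
    {w : ℝ × ℝ} (hw : w ∈ M.G0 a) : M.G0 a ∈ 𝓝[M.GF] w := by
  have := M.finA
  set K := (⋃ b : {b : M.A // b ≠ a}, M.Gr b) ∪ (M.P : Set ℝ) ×ˢ (M.P : Set ℝ)
  have hK : IsClosed K :=
    (isClosed_iUnion_of_finite fun b : {b : M.A // b ≠ a} => isClosed_Gr b.1).union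
      (M.P.finite_toSet.prod M.P.finite_toSet).isClosed
  have hwK : w ∉ K := by
    rintro (hb | hP)
    · obtain ⟨⟨b, hba⟩, hb⟩ := mem_iUnion.1 hb
      by_cases hb0 : w ∈ M.G0 b
      · exact disjoint_left.1 (hpp.2 b a hba) hb0 hw
      · exact disjoint_left.1 (disjoint_G0_P_prod ha) hw (Gr_diff_G0_subset b ⟨hb, hb0⟩)
    · exact disjoint_left.1 (disjoint_G0_P_prod ha) hw hP
  refine mem_nhdsWithin.2 ⟨Kᶜ, hK.isOpen_compl, hwK, ?_⟩
  rintro w' ⟨hw'K, hw'⟩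
  obtain ⟨b, hb⟩ := mem_iUnion.1 hw'
  by_cases hba : b = a
  · subst hba
    by_contra hb0
    exact hw'K (.inr (Gr_diff_G0_subset b ⟨hb, hb0⟩))
  · exact absurd (.inl (mem_iUnion.2 ⟨⟨b, hba⟩, hb⟩)) hw'K

theorem finite_fiber_GF (t : ℝ) : {s | (s, t) ∈ M.GF}.Finite := by
  have := M.finA
  have hfiber : {s | (s, t) ∈ M.GF} = ⋃ b, {s | (s, t) ∈ M.Gr b} := by
    ext s
    simp [GF]
  rw [hfiber]
  refine finite_iUnion fun b => Set.Subsingleton.finite ?_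
  rcases M.A_cover b with h | h
  · intro s hs s' hs'
    rw [mem_ofPred_eq, M.Gr_A0 b h] at hs hs'
    have hg := (M.g_A0 b h).1
    calc s = M.g b (M.f b s) := (hg s hs.1).symm
      _ = M.g b (M.f b s') := by rw [← hs.2, ← hs'.2]
      _ = s' := hg s' hs'.1
  · obtain ⟨p, -, hD⟩ := M.D_A12 b h
    refine (subsingleton_singleton (a := p)).anti fun s hs => ?_
    rw [mem_ofPred_eq, M.Gr_A12 b h, hD] at hs
    exact hs.1

theorem eventually_mem_G0_of_snd_mem_R0 (hpp : M.ProperlyParametrized) {a : M.A}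
    {w : ℝ × ℝ} (hw : w ∈ M.G0 a) : ∀ᶠ w' in 𝓝[M.GF] w, w'.2 ∈ M.R0 a → w' ∈ M.G0 a := by
  by_cases h01 : a ∈ M.A0 ∪ M.A1
  · exact Filter.mem_of_superset (G0_mem_nhdsWithin_GF hpp h01 hw) fun _ h _ => h
  have h : a ∈ M.A2 :=
    ((M.A_cover a).resolve_left fun h => h01 (.inl h)).resolve_left fun h => h01 (.inr h)
  obtain ⟨p, -, hD⟩ := M.D_A12 a (.inr h)
  obtain ⟨q, -, hR⟩ := M.R_A2 a h
  have hG0 : M.G0 a = {(p, q)} := by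
    rw [M.G0_A2 a h, M.Gr_A12 a (.inr h), hD, hR, singleton_prod_singleton]
  rw [hG0, mem_singleton_iff] at hw
  subst hw
  have hisolated : ({s | (s, q) ∈ M.GF} \ {p})ᶜ ∈ 𝓝 p :=
    (finite_fiber_GF q).sdiff.isClosed.isOpen_compl.mem_nhds fun hp => hp.2 rfl
  filter_upwards [self_mem_nhdsWithin,
    nhdsWithin_le_nhds (continuous_fst.continuousAt.preimage_mem_nhds hisolated)]
    with ⟨s, t⟩ hst hs ht
  obtain rfl : t = q := by rwa [M.R0_A2 a h, hR] at ht
  rw [hG0, mem_singleton_iff, Prod.mk.injEq]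
  exact ⟨of_not_not fun hsp => hs ⟨hst, hsp⟩, rfl⟩

theorem fst_mem_D0 {a : M.A} {w : ℝ × ℝ} (hw : w ∈ M.G0 a) : w.1 ∈ M.D0 a := by
  rcases M.A_cover a with h | h | h
  · rw [M.G0_A0 a h] at hw
    exact hw.1
  · rw [M.G0_A1 a h, ← M.D0_A12 a (.inl h)] at hw
    exact hw.1
  · rw [M.G0_A2 a h, M.Gr_A12 a (.inr h), ← M.D0_A12 a (.inr h)] at hw
    exact hw.1

theorem D0_succ_subset_R0_castSucc {n : ℕ} {u : Fin (n + 1) → M.A} (hu : u ∈ M.Lang (n + 1))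
    (i : Fin n) : M.D0 (u i.succ) ⊆ M.R0 (u i.castSucc) := by
  obtain ⟨z, hz, m, hm⟩ := hu
  rw [hm, hm]
  exact hz (m + i)

theorem edge_mem_GF {n : ℕ} {x : Fin (n + 1) → ℝ} (hx : x ∈ M.finTraj (n + 1)) (i : Fin n) :
    (x i.castSucc, x i.succ) ∈ M.GF :=
  hx.2 i.castSucc (by simp)

theorem tendsto_edge_nhdsWithin_GF {n : ℕ} (x : M.finTraj (n + 1)) (i : Fin n) :
    Tendsto (fun y : M.finTraj (n + 1) => (y.1 i.castSucc, y.1 i.succ)) (𝓝 x)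
      (𝓝[M.GF] (x.1 i.castSucc, x.1 i.succ)) :=
  tendsto_nhdsWithin_iff.2
    ⟨(((continuous_apply _).comp continuous_subtype_val).prodMk
      ((continuous_apply _).comp continuous_subtype_val)).tendsto x,
      .of_forall fun y => edge_mem_GF y.2 i⟩

theorem eventually_forall_ge_edge_mem_G0 (hpp : M.ProperlyParametrized) {n : ℕ}
    {u : Fin (n + 1) → M.A} (hu : u ∈ M.Lang (n + 1)) (hlast : u (Fin.last n) ∈ M.A0 ∪ M.A1)
    {x : M.finTraj (n + 2)} (hx : M.SpecialLabeled x.1 u) (i : Fin (n + 1)) :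
    ∀ᶠ y in 𝓝 x, ∀ j, i ≤ j → (y.1 j.castSucc, y.1 j.succ) ∈ M.G0 (u j) := by
  induction i using Fin.reverseInduction with
  | last =>
    filter_upwards [tendsto_edge_nhdsWithin_GF x (Fin.last n)
      (G0_mem_nhdsWithin_GF hpp hlast (hx _))] with y hy j hj
    rwa [Fin.last_le_iff.1 hj]
  | cast i ih =>
    filter_upwards [ih, (tendsto_edge_nhdsWithin_GF x i.castSucc).eventually
      (eventually_mem_G0_of_snd_mem_R0 hpp (hx _))] with y hnext hi j hj
    rcases hj.lt_or_eq with hj | rfl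
    · exact hnext j (Fin.castSucc_lt_iff_succ_le.1 hj)
    · refine hi ?_
      rw [Fin.succ_castSucc]
      exact D0_succ_subset_R0_castSucc hu i (fst_mem_D0 (hnext i.succ le_rfl))

theorem essentialWord_of_last_mem (hpp : M.ProperlyParametrized) {n : ℕ}
    {u : Fin (n + 1) → M.A} (hu : u ∈ M.Lang (n + 1)) (hlast : u (Fin.last n) ∈ M.A0 ∪ M.A1) :
    M.EssentialWord u := by
  refine ⟨hu, isOpen_iff_mem_nhds.2 fun x hx => ?_⟩
  filter_upwards [eventually_forall_ge_edge_mem_G0 hpp hu hlast hx 0] with y hy i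
    using hy i (Fin.zero_le i)

theorem exists_A0_D0_subset_R0 {b : M.A} (hb : b ∈ M.A0 ∪ M.A1) :
    ∃ c ∈ M.A0, M.D0 c ⊆ M.R0 b := by
  obtain ⟨u, hu, v, hv, huv, hR⟩ : ∃ u ∈ M.P, ∃ v ∈ M.P, u < v ∧ M.R b = Icc u v :=
    hb.elim (M.R_A0 b) fun h =>
      let ⟨u, hu, v, hv, huv, hR, _⟩ := M.R_A1 b h
      ⟨u, hu, v, hv, huv, hR⟩
  rw [M.R0_A01 b hb, hR, interior_Icc]
  obtain ⟨s, hs, hsP⟩ := ((Ioo_infinite huv).sdiff M.P.finite_toSet).nonempty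
  have hs01 : s ∈ Icc (0 : ℝ) 1 := ⟨(M.P_sub hu).1.trans hs.1.le, hs.2.le.trans (M.P_sub hv).2⟩
  obtain ⟨c, hc⟩ := mem_iUnion.1 (M.cover ▸ hs01)
  by_cases hc0 : c ∈ M.A0
  · obtain ⟨p, hp, q, hq, hpq, hgap, hD⟩ := M.D_A0 c hc0
    refine ⟨c, hc0, ?_⟩
    rw [M.D0_A0 c hc0, hD, interior_Icc]
    have hspq : s ∈ Ioo p q := by
      by_contra hs'
      have hs'' : s ∈ Icc p q \ Ioo p q := ⟨hD ▸ hc, hs'⟩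
      rw [Icc_sdiff_Ioo_same hpq.le] at hs''
      rcases hs'' with rfl | rfl
      exacts [hsP hp, hsP hq]
    exact Ioo_subset_Ioo (not_lt.1 fun hup => hgap u hu ⟨hup, hs.1.trans hspq.2⟩)
      (not_lt.1 fun hqv => hgap v hv ⟨hspq.1.trans hs.2, hqv⟩)
  · obtain ⟨p, hp, hD⟩ := M.D_A12 c ((M.A_cover c).resolve_left hc0)
    rw [hD, mem_singleton_iff] at hc
    exact absurd (hc ▸ hp) hsP

theorem exists_mem_SFT_head {a : M.A} (ha : a ∈ M.A0 ∪ M.A1) : ∃ z ∈ M.SFT, z 0 = a := by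
  choose next hnext using fun b : {b // b ∈ M.A0 ∪ M.A1} => exists_A0_D0_subset_R0 b.2
  let step : {b // b ∈ M.A0 ∪ M.A1} → {b // b ∈ M.A0 ∪ M.A1} :=
    fun b => ⟨next b, .inl (hnext b).1⟩
  refine ⟨fun k => (step^[k] ⟨a, ha⟩).1, fun k => ?_, rfl⟩
  simp only [Function.iterate_succ_apply']
  exact (hnext _).2

theorem mem_Ess_of_mem_A0_union_A1 (hpp : M.ProperlyParametrized) {a : M.A}
    (ha : a ∈ M.A0 ∪ M.A1) : a ∈ M.Ess := by
  obtain ⟨z, hz, rfl⟩ := exists_mem_SFT_head ha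
  have hword : (fun _ : Fin 1 => z 0) ∈ M.Lang 1 := ⟨z, hz, 0, fun i => by simp⟩
  exact ⟨1, _, essentialWord_of_last_mem hpp hword ha, 0, rfl⟩

end MarkovMultiMap

/-- Every word of the language ending with a letter of `A₀ ∪ A₁` is essential;
in particular `A₀ ∪ A₁ ⊆ A^(e)`. -/
theorem stmt5 (M : MarkovMultiMap) (hpp : M.ProperlyParametrized) :
    (∀ n : ℕ, ∀ u : Fin (n + 1) → M.A, u ∈ M.Lang (n + 1) →
      u (Fin.last n) ∈ M.A0 ∪ M.A1 → M.EssentialWord u) ∧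
    M.A0 ∪ M.A1 ⊆ M.Ess :=
  ⟨fun _ _ hu hlast => M.essentialWord_of_last_mem hpp hu hlast,
    fun _ ha => M.mem_Ess_of_mem_A0_union_A1 hpp ha⟩
end

section
/- Let F be a properly parametrized Markov multi-map and let u=u₀⋯u_{n−1}∈L_n be a word of the associated SFT with u_{n−1}∈A₂. Let x∈X_{n+1} be the unique finite trajectory such that (x_k,x_{k+1})∈G(u_k) for all k=0,…,n−1. Then u is essential if and only if x is an isolated point of X_{n+1}. -/
open Set Topology

/-- A continuous bijection of a closed interval onto a closed interval maps the
interior into the interior. -/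
private lemma endpt {f : ℝ → ℝ} {p q a b x : ℝ} (hpq : p ≤ q)
    (hc : ContinuousOn f (Set.Icc p q)) (hb : Set.BijOn f (Set.Icc p q) (Set.Icc a b))
    (hx : x ∈ Set.Icc p q) (hfx : f x ∈ Set.Ioo a b) : x ∈ Set.Ioo p q := by
  have hab : a ≤ b := (hfx.1.trans hfx.2).le
  obtain ⟨ya, hya, hyaf⟩ := hb.surjOn (Set.left_mem_Icc.2 hab)
  obtain ⟨yb, hyb, hybf⟩ := hb.surjOn (Set.right_mem_Icc.2 hab)
  have hpm := Set.left_mem_Icc.2 hpq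
  have hqm := Set.right_mem_Icc.2 hpq
  have hfp := hb.mapsTo hpm
  have hfq := hb.mapsTo hqm
  rcases ContinuousOn.strictMonoOn_of_injOn_Icc' hpq hc hb.injOn with hm | hm
  · have hfpa : f p = a := by
      rcases eq_or_lt_of_le hya.1 with h | h
      · rw [h]; exact hyaf
      · have := hm hpm hya h; rw [hyaf] at this; exact absurd hfp.1 (not_le.2 this)
    have hfqb : f q = b := by
      rcases eq_or_lt_of_le hyb.2 with h | h
      · rw [← h]; exact hybf
      · have := hm hyb hqm h; rw [hybf] at this; exact absurd hfq.2 (not_le.2 this)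
    constructor
    · rcases eq_or_lt_of_le hx.1 with h | h
      · exact absurd hfx.1 (by rw [← h, hfpa]; exact lt_irrefl a)
      · exact h
    · rcases eq_or_lt_of_le hx.2 with h | h
      · exact absurd hfx.2 (by rw [h, hfqb]; exact lt_irrefl b)
      · exact h
  · have hfpb : f p = b := by
      rcases eq_or_lt_of_le hyb.1 with h | h
      · rw [h]; exact hybf
      · have := hm hpm hyb h; rw [hybf] at this; exact absurd hfp.2 (not_le.2 this)
    have hfqa : f q = a := by
      rcases eq_or_lt_of_le hya.2 with h | h
      · rw [← h]; exact hyaf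
      · have := hm hya hqm h; rw [hyaf] at this; exact absurd hfq.1 (not_le.2 this)
    constructor
    · rcases eq_or_lt_of_le hx.1 with h | h
      · exact absurd hfx.2 (by rw [← h, hfpb]; exact lt_irrefl b)
      · exact h
    · rcases eq_or_lt_of_le hx.2 with h | h
      · exact absurd hfx.1 (by rw [h, hfqa]; exact lt_irrefl a)
      · exact h

/-- For a word `u ∈ L_{n+1}` ending with a letter of `A₂`, with `x` the unique finite
trajectory labeled by `u`, the word `u` is essential iff `x` is an isolated point of
`X_{n+2}`. -/
theorem stmt6 (M : MarkovMultiMap) (hpp : M.ProperlyParametrized)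
    (n : ℕ) (u : Fin (n + 1) → M.A) (hu : u ∈ M.Lang (n + 1))
    (hlast : u (Fin.last n) ∈ M.A2)
    (x : Fin (n + 2) → ℝ) (hx : x ∈ M.finTraj (n + 2)) (hlab : M.Labeled x u)
    (huniq : ∀ x' ∈ M.finTraj (n + 2), M.Labeled x' u → x' = x) :
    M.EssentialWord u ↔ IsOpen {y : M.finTraj (n + 2) | y.1 = x} := by
  -- The SFT adjacency condition along `u`.
  obtain ⟨z, hz, m, hzu⟩ := hu
  have hadj : ∀ i : Fin n, M.D0 (u i.succ) ⊆ M.R0 (u i.castSucc) := fun i => by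
    rw [hzu i.succ, hzu i.castSucc, Fin.val_succ, Fin.coe_castSucc, ← add_assoc]
    exact hz (m + i)
  -- The unique trajectory `x` is in fact specially labeled by `u`.
  have key : ∀ i : Fin (n + 1),
      x i.castSucc ∈ M.D0 (u i) ∧ (x i.castSucc, x i.succ) ∈ M.G0 (u i) := by
    intro i
    induction i using Fin.reverseInduction with
    | last =>
      have hGr := M.Gr_A12 _ (Or.inr hlast)
      have hx1 := hlab (Fin.last n)
      rw [hGr] at hx1
      refine ⟨?_, ?_⟩
      · rw [M.D0_A12 _ (Or.inr hlast)]; exact hx1.1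
      · rw [M.G0_A2 _ hlast, hGr]; exact hx1
    | cast i ih =>
      have hmem : x i.castSucc.succ ∈ M.R0 (u i.castSucc) := by
        have h1 : x i.succ.castSucc ∈ M.D0 (u i.succ) := ih.1
        rw [← Fin.succ_castSucc] at h1
        exact hadj i h1
      have hGrmem := hlab i.castSucc
      rcases M.A_cover (u i.castSucc) with h0 | h1 | h2
      · obtain ⟨p, hp, q, hq, hpq, -, hD⟩ := M.D_A0 _ h0
        obtain ⟨a', ha', b', hb', hab', hR⟩ := M.R_A0 _ h0
        obtain ⟨hcont, hbij⟩ := M.f_homeo _ h0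
        rw [M.Gr_A0 _ h0] at hGrmem
        have hfx : M.f (u i.castSucc) (x i.castSucc.castSucc) ∈ Set.Ioo a' b' := by
          have h2 := hmem
          rw [M.R0_A01 _ (Or.inl h0), hR, interior_Icc] at h2
          rw [← hGrmem.2]; exact h2
        rw [hD] at hcont
        rw [hD, hR] at hbij
        have hx0 : x i.castSucc.castSucc ∈ Set.Ioo p q :=
          endpt hpq.le hcont hbij (hD ▸ hGrmem.1) hfx
        have hD0 : x i.castSucc.castSucc ∈ M.D0 (u i.castSucc) := by
          rw [M.D0_A0 _ h0, hD, interior_Icc]; exact hx0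
        exact ⟨hD0, by rw [M.G0_A0 _ h0]; exact ⟨hD0, hGrmem.2⟩⟩
      · rw [M.Gr_A12 _ (Or.inl h1)] at hGrmem
        refine ⟨?_, ?_⟩
        · rw [M.D0_A12 _ (Or.inl h1)]; exact hGrmem.1
        · rw [M.G0_A1 _ h1]; exact ⟨hGrmem.1, hmem⟩
      · rw [M.Gr_A12 _ (Or.inr h2)] at hGrmem
        refine ⟨?_, ?_⟩
        · rw [M.D0_A12 _ (Or.inr h2)]; exact hGrmem.1
        · rw [M.G0_A2 _ h2, M.Gr_A12 _ (Or.inr h2)]; exact hGrmem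
  have hspec : M.SpecialLabeled x u := fun i => (key i).2
  -- `G₀(a) ⊆ G(a)`.
  have hG0sub : ∀ a : M.A, M.G0 a ⊆ M.Gr a := by
    intro a
    rcases M.A_cover a with h0 | h1 | h2
    · rw [M.G0_A0 _ h0, M.Gr_A0 _ h0, M.D0_A0 _ h0]
      exact fun w hw => ⟨interior_subset hw.1, hw.2⟩
    · rw [M.G0_A1 _ h1, M.Gr_A12 _ (Or.inl h1), M.R0_A01 _ (Or.inr h1)]
      exact Set.prod_mono_right interior_subset
    · rw [M.G0_A2 _ h2]
  -- The two sets coincide.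
  have hsets : {y : M.finTraj (n + 2) | M.SpecialLabeled y.1 u}
      = {y : M.finTraj (n + 2) | y.1 = x} := by
    ext y
    constructor
    · intro hy
      exact huniq y.1 y.2 (fun i => hG0sub _ (hy i))
    · intro hy
      show M.SpecialLabeled y.1 u
      rw [show y.1 = x from hy]
      exact hspec
  constructor
  · intro h; rw [← hsets]; exact h.2
  · intro h; exact ⟨⟨z, hz, m, hzu⟩, hsets ▸ h⟩
end
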